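/- Let E be a finite-dimensional real inner product space and let Σ₀ be a finite set of linear forms on E. Then there exists a real constant γ(Σ₀) > 0 such that: for all subsets Σ ⊆ Σ₀ and Σ' ⊆ Σ₀, and all functions μ : Σ → ℝ_{≤0} and μ' : Σ' → ℝ_{≤0} such that C_μ = C_{μ'}, one has h_μ(x) ≤ γ(Σ₀)·h_{μ'}(x) for every x ∈ E. -/

import Mathlib

open scoped Classical

local notation "⟪" x ", " y "⟫_ℝ" => @inner ℝ _ _ x y

/-- `hMu S μ x = max({0} ∪ {λ(x) + μ(λ) : λ ∈ S})` for a finite set `S` of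
linear forms on `E` and `μ : Σ → ℝ`. -/
noncomputable def hMu {E : Type*} [NormedAddCommGroup E] [InnerProductSpace ℝ E]
    (S : Finset (E →ₗ[ℝ] ℝ)) (μ : (E →ₗ[ℝ] ℝ) → ℝ) (x : E) : ℝ :=
  (insert (0 : ℝ) (S.image fun l => l x + μ l)).max' (Finset.insert_nonempty _ _)

section Aux

variable {E : Type*} [NormedAddCommGroup E] [InnerProductSpace ℝ E]

lemma hMu_nonneg (S : Finset (E →ₗ[ℝ] ℝ)) (μ : (E →ₗ[ℝ] ℝ) → ℝ) (x : E) :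
    0 ≤ hMu S μ x :=
  Finset.le_max' _ _ (Finset.mem_insert_self _ _)

lemma le_hMu {S : Finset (E →ₗ[ℝ] ℝ)} {μ : (E →ₗ[ℝ] ℝ) → ℝ} {x : E}
    {l : E →ₗ[ℝ] ℝ} (hl : l ∈ S) : l x + μ l ≤ hMu S μ x :=
  Finset.le_max' _ _ (Finset.mem_insert_of_mem
    (Finset.mem_image_of_mem (fun l => l x + μ l) hl))

lemma hMu_le {S : Finset (E →ₗ[ℝ] ℝ)} {μ : (E →ₗ[ℝ] ℝ) → ℝ} {x : E} {c : ℝ}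
    (hc : 0 ≤ c) (h : ∀ l ∈ S, l x + μ l ≤ c) : hMu S μ x ≤ c := by
  apply Finset.max'_le
  intro b hb
  rcases Finset.mem_insert.mp hb with rfl | hb
  · exact hc
  · obtain ⟨l, hl, rfl⟩ := Finset.mem_image.mp hb
    exact h l hl

lemma hMu_eq_zero_iff {S : Finset (E →ₗ[ℝ] ℝ)} {μ : (E →ₗ[ℝ] ℝ) → ℝ} {x : E} :
    hMu S μ x = 0 ↔ ∀ l ∈ S, l x + μ l ≤ 0 := by
  constructor
  · intro h l hl
    exact h ▸ le_hMu hl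
  · intro h
    exact le_antisymm (hMu_le le_rfl h) (hMu_nonneg _ _ _)

/-- The linear map `(↥U → ℝ) → E` sending coefficients to the combination. -/
noncomputable def phiMap (U : Finset E) : (↥U → ℝ) →ₗ[ℝ] E where
  toFun t := ∑ i : ↥U, t i • (i : E)
  map_add' s t := by simp [add_smul, Finset.sum_add_distrib]
  map_smul' c t := by simp [smul_smul, Finset.smul_sum]

/-- The cone generated by a finite set of vectors. -/
noncomputable def cSet (U : Finset E) : Set E := (phiMap U) '' {t | ∀ i, 0 ≤ t i}

lemma phiMap_eq_sum (U : Finset E) (t : E → ℝ) :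
    phiMap U (fun i => t i) = ∑ v ∈ U, t v • v := by
  show ∑ i : ↥U, t i • (i : E) = _
  rw [← Finset.sum_coe_sort U (fun v => t v • v)]

lemma mem_cSet {U : Finset E} {x : E} :
    x ∈ cSet U ↔ ∃ t : E → ℝ, (∀ v ∈ U, 0 ≤ t v) ∧ ∑ v ∈ U, t v • v = x := by
  constructor
  · rintro ⟨t, ht, rfl⟩
    refine ⟨fun v => if h : v ∈ U then t ⟨v, h⟩ else 0, ?_, ?_⟩
    · intro v hv; dsimp only; rw [dif_pos hv]; exact ht _
    · rw [← phiMap_eq_sum]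
      congr 1
      ext i
      rw [dif_pos i.2]
  · rintro ⟨t, ht, rfl⟩
    exact ⟨fun i => t i, fun i => ht i i.2, phiMap_eq_sum U t⟩

lemma zero_mem_cSet (U : Finset E) : (0 : E) ∈ cSet U :=
  mem_cSet.mpr ⟨0, fun _ _ => le_rfl, by simp⟩

lemma cSet_mono {W U : Finset E} (h : W ⊆ U) : cSet W ⊆ cSet U := by
  intro x hx
  obtain ⟨t, ht, rfl⟩ := mem_cSet.mp hx
  refine mem_cSet.mpr ⟨fun v => if v ∈ W then t v else 0, ?_, ?_⟩
  · intro v hv; dsimp only; split_ifs with h'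
    · exact ht v h'
    · exact le_rfl
  · rw [← Finset.sum_subset h]
    · exact Finset.sum_congr rfl fun v hv => by dsimp only; rw [if_pos hv]
    · intro v hv hvW; dsimp only; rw [if_neg hvW, zero_smul]

lemma smul_mem_cSet {U : Finset E} {x : E} {c : ℝ} (hc : 0 ≤ c) (hx : x ∈ cSet U) :
    c • x ∈ cSet U := by
  obtain ⟨t, ht, rfl⟩ := mem_cSet.mp hx
  refine mem_cSet.mpr ⟨fun v => c * t v, fun v hv => mul_nonneg hc (ht v hv), ?_⟩
  rw [Finset.smul_sum]
  exact Finset.sum_congr rfl fun v hv => (smul_smul c (t v) v).symm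

lemma mem_cSet_self {U : Finset E} {v : E} (hv : v ∈ U) : v ∈ cSet U := by
  refine mem_cSet.mpr ⟨fun w => if w = v then 1 else 0, ?_, ?_⟩
  · intro w hw; dsimp only; split_ifs <;> norm_num
  · rw [Finset.sum_eq_single v]
    · simp
    · intro w hw hwv; dsimp only; rw [if_neg hwv, zero_smul]
    · intro h; exact absurd hv h

lemma convex_cSet (U : Finset E) : Convex ℝ (cSet U) := by
  have h1 : Convex ℝ {t : ↥U → ℝ | ∀ i, 0 ≤ t i} := by
    intro s hs t ht a b ha hb _ i
    exact add_nonneg (mul_nonneg ha (hs i)) (mul_nonneg hb (ht i))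
  exact h1.linear_image (phiMap U)

/-- Conic Carathéodory. -/
lemma carath (U : Finset E) : ∀ t : E → ℝ, (∀ v ∈ U, 0 ≤ t v) →
    ∃ W ⊆ U, LinearIndependent ℝ (fun i : ↥W => (i : E)) ∧
      (∑ v ∈ U, t v • v) ∈ cSet W := by
  induction U using Finset.strongInduction with
  | _ U ih =>
    intro t ht
    by_cases hind : LinearIndependent ℝ (fun i : ↥U => (i : E))
    · exact ⟨U, subset_rfl, hind, mem_cSet.mpr ⟨t, ht, rfl⟩⟩
    · have hex : ∃ g : ↥U → ℝ, ∑ i, g i • (i : E) = 0 ∧ ∃ i, 0 < g i := by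
        obtain ⟨g, hg0, i₀, hgi₀⟩ := Fintype.not_linearIndependent_iff.mp hind
        rcases hgi₀.lt_or_gt with h | h
        · refine ⟨-g, ?_, i₀, by simpa using h⟩
          simp only [Pi.neg_apply, neg_smul, Finset.sum_neg_distrib, hg0, neg_zero]
        · exact ⟨g, hg0, i₀, h⟩
      obtain ⟨g, hgsum, i₁, hi₁⟩ := hex
      set F : Finset ↥U := Finset.univ.filter (fun i => 0 < g i) with hF
      have hFne : F.Nonempty := ⟨i₁, by simp [hF, hi₁]⟩
      obtain ⟨i₀, hi₀F, hmin⟩ := Finset.exists_min_image F (fun i => t i / g i) hFne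
      have hgi₀ : 0 < g i₀ := (Finset.mem_filter.mp hi₀F).2
      set τ : ℝ := t i₀ / g i₀ with hτ
      have hτ0 : 0 ≤ τ := div_nonneg (ht _ i₀.2) hgi₀.le
      set ghat : E → ℝ := fun v => if h : v ∈ U then g ⟨v, h⟩ else 0 with hghat
      set t' : E → ℝ := fun v => t v - τ * ghat v with ht'
      have ht'nonneg : ∀ v ∈ U, 0 ≤ t' v := by
        intro v hv
        have hg : ghat v = g ⟨v, hv⟩ := by simp [hghat, hv]
        rcases le_or_gt (g ⟨v, hv⟩) 0 with h | h
        · have : τ * ghat v ≤ 0 := mul_nonpos_of_nonneg_of_nonpos hτ0 (hg ▸ h)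
          simp only [ht']
          linarith [ht v hv]
        · have hvF : (⟨v, hv⟩ : ↥U) ∈ F := by simp [hF, h]
          have := hmin _ hvF
          have : τ * g ⟨v, hv⟩ ≤ t v := by
            rw [hτ]
            calc t i₀ / g i₀ * g ⟨v, hv⟩ ≤ t v / g ⟨v, hv⟩ * g ⟨v, hv⟩ :=
              mul_le_mul_of_nonneg_right this h.le
            _ = t v := div_mul_cancel₀ _ h.ne'
          simp only [ht', hg]
          linarith
      have hsum : ∑ v ∈ U, t' v • v = ∑ v ∈ U, t v • v := by
        have h1 : ∑ v ∈ U, ghat v • v = 0 := by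
          rw [← Finset.sum_attach U (fun v => ghat v • v)]
          rw [← hgsum]
          apply Finset.sum_congr rfl
          intro i _
          simp [hghat, i.2]
        simp only [ht', sub_smul, Finset.sum_sub_distrib, mul_smul, ← Finset.smul_sum, h1,
          smul_zero, sub_zero]
      have hti₀ : t' (i₀ : E) = 0 := by
        have hg : ghat (i₀ : E) = g i₀ := by simp [hghat, i₀.2]
        simp only [ht', hg, hτ]
        field_simp
        ring
      have hU' : U.erase (i₀ : E) ⊂ U := Finset.erase_ssubset i₀.2
      have hsum2 : ∑ v ∈ U.erase (i₀ : E), t' v • v = ∑ v ∈ U, t v • v := by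
        rw [← hsum, ← Finset.add_sum_erase U _ i₀.2, hti₀, zero_smul, zero_add]
      obtain ⟨W, hWsub, hWind, hWmem⟩ :=
        ih _ hU' t' (fun v hv => ht'nonneg v (Finset.mem_of_mem_erase hv))
      exact ⟨W, hWsub.trans (Finset.erase_subset _ _), hWind, hsum2 ▸ hWmem⟩

lemma isClosed_orthant (U : Finset E) : IsClosed {t : ↥U → ℝ | ∀ i, 0 ≤ t i} := by
  have : {t : ↥U → ℝ | ∀ i, 0 ≤ t i} = ⋂ i, (fun t : ↥U → ℝ => t i) ⁻¹' Set.Ici 0 := by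
    ext t; simp [Set.mem_iInter]
  rw [this]
  exact isClosed_iInter fun i => isClosed_Ici.preimage (continuous_apply i)

lemma cSet_closed_of_linIndep [FiniteDimensional ℝ E] (U : Finset E)
    (h : LinearIndependent ℝ (fun i : ↥U => (i : E))) : IsClosed (cSet U) := by
  have hker : LinearMap.ker (phiMap U) = ⊥ := by
    rw [LinearMap.ker_eq_bot']
    intro t htt
    exact funext (Fintype.linearIndependent_iff.mp h t htt)
  exact (LinearMap.isClosedEmbedding_of_injective hker).isClosedMap _ (isClosed_orthant U)

lemma cSet_closed [FiniteDimensional ℝ E] (V : Finset E) : IsClosed (cSet V) := by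
  have heq : cSet V =
      ⋃ W ∈ (V.powerset.filter
        (fun W : Finset E => LinearIndependent ℝ (fun i : ↥W => (i : E)))), cSet W := by
    ext x
    constructor
    · intro hx
      obtain ⟨t, ht, rfl⟩ := mem_cSet.mp hx
      obtain ⟨W, hWV, hind, hmem⟩ := carath V t ht
      refine Set.mem_biUnion ?_ hmem
      exact Finset.mem_filter.mpr ⟨Finset.mem_powerset.mpr hWV, hind⟩
    · intro hx
      obtain ⟨W, hW, hxW⟩ := Set.mem_iUnion₂.mp hx
      exact cSet_mono (Finset.mem_powerset.mp (Finset.mem_filter.mp hW).1) hxW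
  rw [heq]
  apply Set.Finite.isClosed_biUnion (Finset.finite_toSet _)
  intro W hW
  exact cSet_closed_of_linIndep W (Finset.mem_filter.mp hW).2

/-- ℓ¹-type bound from linear independence. -/
lemma exists_bound [FiniteDimensional ℝ E] (U : Finset E)
    (h : LinearIndependent ℝ (fun i : ↥U => (i : E))) :
    ∃ c : ℝ, ∀ t : ↥U → ℝ, (∑ i, t i) ≤ c * ‖phiMap U t‖ := by
  have hker : LinearMap.ker (phiMap U) = ⊥ := by
    rw [LinearMap.ker_eq_bot']
    intro t htt
    exact funext (Fintype.linearIndependent_iff.mp h t htt)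
  have hinj : Function.Injective (phiMap U) := LinearMap.ker_eq_bot.mp hker
  set e := LinearEquiv.ofInjective (phiMap U) hinj with he
  set G := LinearMap.toContinuousLinearMap (e.symm.toLinearMap) with hG
  refine ⟨(U.card : ℝ) * ‖G‖, ?_⟩
  intro t
  have hGt : G (e t) = t := e.symm_apply_apply t
  have hnorm : ‖t‖ ≤ ‖G‖ * ‖phiMap U t‖ := by
    calc ‖t‖ = ‖G (e t)‖ := by rw [hGt]
    _ ≤ ‖G‖ * ‖e t‖ := G.le_opNorm _
    _ = ‖G‖ * ‖phiMap U t‖ := by congr 1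
  calc (∑ i, t i) ≤ ∑ i, ‖t i‖ := Finset.sum_le_sum fun i _ => le_abs_self _
  _ ≤ (Finset.univ.card : ℕ) • ‖t‖ :=
      Finset.sum_le_card_nsmul _ _ _ (fun i _ => norm_le_pi_norm t i)
  _ = (U.card : ℝ) * ‖t‖ := by
      rw [nsmul_eq_mul]
      norm_num [Finset.card_univ, Fintype.card_coe]
  _ ≤ (U.card : ℝ) * (‖G‖ * ‖phiMap U t‖) :=
      mul_le_mul_of_nonneg_left hnorm (by positivity)
  _ = (U.card : ℝ) * ‖G‖ * ‖phiMap U t‖ := (mul_assoc _ _ _).symm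

end Aux

/-- Let `E` be a finite-dimensional real inner product space
and `Σ₀` a finite set of linear forms on `E`.  There exists `γ(Σ₀) > 0` such
that for all `Σ, Σ' ⊆ Σ₀` and all `μ : Σ → ℝ_{≤0}`, `μ' : Σ' → ℝ_{≤0}` with
`C_μ = C_{μ'}`, one has `h_μ(x) ≤ γ(Σ₀)·h_{μ'}(x)` for every `x ∈ E`. -/
theorem stmt_3 {E : Type*} [NormedAddCommGroup E] [InnerProductSpace ℝ E]
    [FiniteDimensional ℝ E] (S₀ : Finset (E →ₗ[ℝ] ℝ)) :
    ∃ γ : ℝ, 0 < γ ∧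
      ∀ S S' : Finset (E →ₗ[ℝ] ℝ), S ⊆ S₀ → S' ⊆ S₀ →
        ∀ μ μ' : (E →ₗ[ℝ] ℝ) → ℝ, (∀ l ∈ S, μ l ≤ 0) → (∀ l ∈ S', μ' l ≤ 0) →
          {y : E | hMu S μ y = 0} = {y : E | hMu S' μ' y = 0} →
          ∀ x : E, hMu S μ x ≤ γ * hMu S' μ' x := by
  classical
  have hcomp : CompleteSpace E := FiniteDimensional.complete ℝ E
  -- Riesz representatives of the linear forms
  set a : (E →ₗ[ℝ] ℝ) → E := fun l =>
    (InnerProductSpace.toDual ℝ E).symm (LinearMap.toContinuousLinearMap l) with ha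
  have hinner : ∀ (l : E →ₗ[ℝ] ℝ) (v : E), ⟪a l, v⟫_ℝ = l v := by
    intro l v
    rw [ha]
    rw [InnerProductSpace.toDual_symm_apply]
    simp
  set A₀ : Finset E := S₀.image a with hA₀
  -- the "Hoffman" constant K
  have hKex : ∀ W : Finset E, ∃ c : ℝ,
      LinearIndependent ℝ (fun i : ↥W => (i : E)) →
        ∀ t : ↥W → ℝ, (∑ i, t i) ≤ c * ‖phiMap W t‖ := by
    intro W
    by_cases h : LinearIndependent ℝ (fun i : ↥W => (i : E))
    · obtain ⟨c, hc⟩ := exists_bound W h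
      exact ⟨c, fun _ => hc⟩
    · exact ⟨0, fun h' => absurd h' h⟩
  choose c hc using hKex
  set K : ℝ := (∑ W ∈ A₀.powerset, |c W|) + 1 with hK
  have hsum_nonneg : 0 ≤ ∑ W ∈ A₀.powerset, |c W| :=
    Finset.sum_nonneg fun W _ => abs_nonneg _
  have hK1 : 1 ≤ K := by rw [hK]; linarith
  have hKbound : ∀ W ∈ A₀.powerset, c W ≤ K := by
    intro W hW
    have h1 : |c W| ≤ ∑ W' ∈ A₀.powerset, |c W'| :=
      Finset.single_le_sum (f := fun W' => |c W'|) (fun W' _ => abs_nonneg _) hW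
    calc c W ≤ |c W| := le_abs_self _
    _ ≤ K := by rw [hK]; linarith
  -- the Lipschitz constant L
  set L : ℝ := (∑ l ∈ S₀, ‖LinearMap.toContinuousLinearMap l‖) + 1 with hL
  have hLsum_nonneg : 0 ≤ ∑ l ∈ S₀, ‖LinearMap.toContinuousLinearMap l‖ :=
    Finset.sum_nonneg fun l _ => norm_nonneg _
  have hL1 : 1 ≤ L := by rw [hL]; linarith
  have hLbound : ∀ l ∈ S₀, ‖LinearMap.toContinuousLinearMap l‖ ≤ L := by
    intro l hl
    have h1 : ‖LinearMap.toContinuousLinearMap l‖ ≤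
        ∑ l' ∈ S₀, ‖LinearMap.toContinuousLinearMap l'‖ :=
      Finset.single_le_sum (fun l' _ => norm_nonneg _) hl
    rw [hL]; linarith
  refine ⟨L * K, mul_pos (by linarith) (by linarith), ?_⟩
  intro S S' hS hS' μ μ' hμ hμ' hCC x
  set h' := hMu S' μ' x with hh'
  have hh'0 : 0 ≤ h' := hMu_nonneg _ _ _
  set C := {y : E | hMu S' μ' y = 0} with hCdef
  have hCmem : ∀ y, y ∈ C ↔ ∀ l ∈ S', l y + μ' l ≤ 0 := fun y => hMu_eq_zero_iff
  have hCconv : Convex ℝ C := by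
    intro y hy z hz p q hp hq hpq
    refine (hCmem _).mpr ?_
    intro l hl
    have h1 := (hCmem y).mp hy l hl
    have h2 := (hCmem z).mp hz l hl
    have h3 : l (p • y + q • z) + μ' l = p * (l y + μ' l) + q * (l z + μ' l) := by
      simp only [map_add, map_smul, smul_eq_mul]
      linear_combination (-(μ' l)) * hpq
    rw [h3]
    have := mul_nonpos_of_nonneg_of_nonpos hp h1
    have := mul_nonpos_of_nonneg_of_nonpos hq h2
    linarith
  have hCclosed : IsClosed C := by
    have heq : C = ⋂ l ∈ (S' : Set (E →ₗ[ℝ] ℝ)), {y : E | l y + μ' l ≤ 0} := by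
      ext y
      simp only [Set.mem_iInter, Set.mem_setOf_eq, Finset.mem_coe]
      exact hCmem y
    rw [heq]
    refine isClosed_biInter fun l hl => ?_
    exact isClosed_le ((LinearMap.continuous_of_finiteDimensional l).add
      continuous_const) continuous_const
  have h0C : (0 : E) ∈ C := (hCmem 0).mpr fun l hl => by simpa using hμ' l hl
  obtain ⟨y, hyC, hymin⟩ :=
    exists_norm_eq_iInf_of_complete_convex ⟨0, h0C⟩ (hCclosed.isComplete) hCconv x
  have hproj : ∀ z ∈ C, ⟪x - y, z - y⟫_ℝ ≤ 0 :=
    (norm_eq_iInf_iff_real_inner_le_zero hCconv hyC).mp hymin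
  set d := x - y with hd
  by_cases hd0 : d = 0
  · have hxy : x = y := by rwa [hd, sub_eq_zero] at hd0
    have hx0 : hMu S μ x = 0 := by
      have : x ∈ {y : E | hMu S μ y = 0} := by
        rw [hCC]
        rw [hxy]
        exact hyC
      exact this
    rw [hx0]
    exact mul_nonneg (mul_nonneg (by linarith) (by linarith)) hh'0
  -- active constraints
  set N : Finset (E →ₗ[ℝ] ℝ) := S'.filter (fun l => l y + μ' l = 0) with hN
  set V : Finset E := N.image a with hV
  have hVA : V ⊆ A₀ := Finset.image_subset_image ((Finset.filter_subset _ _).trans hS')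
  -- Farkas: d lies in the cone of active constraint normals
  have hdV : d ∈ cSet V := by
    by_contra hdVn
    obtain ⟨f, u, hfu, hud⟩ :=
      geometric_hahn_banach_closed_point (convex_cSet V) (cSet_closed V) hdVn
    have hu0 : 0 < u := by
      have := hfu 0 (zero_mem_cSet V)
      simpa using this
    have hfnonpos : ∀ z ∈ cSet V, f z ≤ 0 := by
      intro z hz
      by_contra hzpos
      push_neg at hzpos
      have hcnn : (0:ℝ) ≤ (u + 1) / f z := div_nonneg (by linarith) hzpos.le
      have := hfu _ (smul_mem_cSet hcnn hz)
      rw [map_smul, smul_eq_mul, div_mul_cancel₀ _ hzpos.ne'] at this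
      linarith
    set w := (InnerProductSpace.toDual ℝ E).symm f with hw
    have hwf : ∀ v : E, ⟪w, v⟫_ℝ = f v := fun v => InnerProductSpace.toDual_symm_apply
    have hlw : ∀ l ∈ N, l w ≤ 0 := by
      intro l hl
      have h1 : f (a l) ≤ 0 := hfnonpos _ (mem_cSet_self (Finset.mem_image_of_mem a hl))
      calc l w = ⟪a l, w⟫_ℝ := (hinner l w).symm
      _ = ⟪w, a l⟫_ℝ := real_inner_comm _ _
      _ = f (a l) := hwf _
      _ ≤ 0 := h1
    have hev : ∀ l ∈ S', ∀ᶠ ε : ℝ in nhdsWithin 0 (Set.Ioi 0),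
        l (y + ε • w) + μ' l ≤ 0 := by
      intro l hl
      by_cases hact : l y + μ' l = 0
      · refine eventually_nhdsWithin_of_forall ?_
        intro ε hε
        have heq : l (y + ε • w) + μ' l = (l y + μ' l) + ε * l w := by
          simp only [map_add, map_smul, smul_eq_mul]
          ring
        rw [heq, hact, zero_add]
        exact mul_nonpos_of_nonneg_of_nonpos (le_of_lt hε)
          (hlw l (Finset.mem_filter.mpr ⟨hl, hact⟩))
      · have hneg : l y + μ' l < 0 := lt_of_le_of_ne ((hCmem y).mp hyC l hl) hact
        have hcont : Continuous fun ε : ℝ => l (y + ε • w) + μ' l := by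
          exact ((LinearMap.continuous_of_finiteDimensional l).comp
            (continuous_const.add (continuous_id.smul continuous_const))).add
            continuous_const
        have htend : Filter.Tendsto (fun ε : ℝ => l (y + ε • w) + μ' l)
            (nhdsWithin 0 (Set.Ioi 0)) (nhds (l y + μ' l)) := by
          have h0 := (hcont.tendsto 0).mono_left
            (nhdsWithin_le_nhds (s := Set.Ioi (0:ℝ)))
          simpa using h0
        exact (htend.eventually_lt_const hneg).mono fun ε hε => hε.le
    have hev2 : ∀ᶠ ε : ℝ in nhdsWithin 0 (Set.Ioi 0),
        (∀ l ∈ S', l (y + ε • w) + μ' l ≤ 0) ∧ 0 < ε := by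
      refine Filter.Eventually.and ?_ ?_
      · exact (Filter.eventually_all_finset S').mpr hev
      · exact eventually_nhdsWithin_of_forall fun ε hε => hε
    obtain ⟨ε, hεS, hε0⟩ := hev2.exists
    have hzC : y + ε • w ∈ C := (hCmem _).mpr hεS
    have hp := hproj _ hzC
    rw [add_sub_cancel_left] at hp
    rw [real_inner_smul_right] at hp
    have hdw : 0 < ⟪x - y, w⟫_ℝ := by
      have h1 : u < f d := hud
      have h2 : ⟪x - y, w⟫_ℝ = f d := by
        rw [hd, real_inner_comm, hwf]
      linarith
    nlinarith
  -- Carathéodory: restrict to a linearly independent subfamily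
  obtain ⟨t0, ht0, ht0sum⟩ := mem_cSet.mp hdV
  obtain ⟨W, hWV, hWind, hWmem⟩ := carath V t0 ht0
  rw [ht0sum] at hWmem
  obtain ⟨s, hs, hssum⟩ := hWmem
  have hWA : W ∈ A₀.powerset := Finset.mem_powerset.mpr (hWV.trans hVA)
  have hsum_le : (∑ i, s i) ≤ K * ‖d‖ := by
    calc (∑ i, s i) ≤ c W * ‖phiMap W s‖ := hc W hWind s
    _ = c W * ‖d‖ := by rw [hssum]
    _ ≤ K * ‖d‖ := mul_le_mul_of_nonneg_right (hKbound W hWA) (norm_nonneg _)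
  have hinner_le : ∀ i : ↥W, ⟪(i : E), d⟫_ℝ ≤ h' := by
    intro i
    have hiV : (i : E) ∈ V := hWV i.2
    obtain ⟨l, hlN, hla⟩ := Finset.mem_image.mp hiV
    have hl' : l ∈ S' := (Finset.mem_filter.mp hlN).1
    have hact : l y + μ' l = 0 := (Finset.mem_filter.mp hlN).2
    have h1 : ⟪(i : E), d⟫_ℝ = l x - l y := by
      rw [← hla, hinner, hd, map_sub]
    rw [h1]
    have h2 : l x - l y = l x + μ' l - (l y + μ' l) := by ring
    rw [h2, hact, sub_zero]
    exact le_hMu hl'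
  have hd2 : ‖d‖ ^ 2 ≤ (∑ i, s i) * h' := by
    have h1 : ⟪d, d⟫_ℝ = ‖d‖ ^ 2 := real_inner_self_eq_norm_sq d
    have hsum_inner : ∀ z : E, ⟪(phiMap W) s, z⟫_ℝ = ∑ i : ↥W, s i * ⟪(i : E), z⟫_ℝ := by
      intro z
      show ⟪∑ i : ↥W, s i • (i : E), z⟫_ℝ = _
      rw [sum_inner]
      exact Finset.sum_congr rfl fun i _ => real_inner_smul_left _ _ _
    calc ‖d‖ ^ 2 = ⟪d, d⟫_ℝ := h1.symm
    _ = ⟪(phiMap W) s, d⟫_ℝ := by rw [hssum]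
    _ = ∑ i : ↥W, s i * ⟪(i : E), d⟫_ℝ := hsum_inner d
    _ ≤ ∑ i : ↥W, s i * h' :=
        Finset.sum_le_sum fun i _ => mul_le_mul_of_nonneg_left (hinner_le i) (hs i)
    _ = (∑ i, s i) * h' := (Finset.sum_mul _ _ _).symm
  have hdpos : 0 < ‖d‖ := norm_pos_iff.mpr hd0
  have hdle : ‖d‖ ≤ K * h' := by
    have h1 : (∑ i, s i) * h' ≤ K * ‖d‖ * h' :=
      mul_le_mul_of_nonneg_right hsum_le hh'0
    have h2 : ‖d‖ ^ 2 ≤ K * ‖d‖ * h' := le_trans hd2 h1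
    have h3 : ‖d‖ * ‖d‖ ≤ (K * h') * ‖d‖ := by nlinarith
    exact le_of_mul_le_mul_right h3 hdpos
  have hfinal : hMu S μ x ≤ L * ‖d‖ := by
    apply hMu_le (mul_nonneg (by linarith) (norm_nonneg _))
    intro l hl
    have hyμ : l y + μ l ≤ 0 := by
      have hyc' : y ∈ {y : E | hMu S μ y = 0} := by rw [hCC]; exact hyC
      exact hMu_eq_zero_iff.mp hyc' l hl
    have h1 : l x + μ l ≤ l x - l y := by linarith
    refine h1.trans ?_
    have h2 : l x - l y = l d := by rw [hd, map_sub]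
    rw [h2]
    have h3 : l d = (LinearMap.toContinuousLinearMap l) d := by
      rw [LinearMap.coe_toContinuousLinearMap']
    rw [h3]
    calc (LinearMap.toContinuousLinearMap l) d
        ≤ ‖(LinearMap.toContinuousLinearMap l) d‖ := le_abs_self _
    _ ≤ ‖LinearMap.toContinuousLinearMap l‖ * ‖d‖ :=
        (LinearMap.toContinuousLinearMap l).le_opNorm d
    _ ≤ L * ‖d‖ := mul_le_mul_of_nonneg_right (hLbound l (hS hl)) (norm_nonneg _)
  calc hMu S μ x ≤ L * ‖d‖ := hfinal
  _ ≤ L * (K * h') := mul_le_mul_of_nonneg_left hdle (by linarith)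
  _ = L * K * h' := (mul_assoc _ _ _).symm
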